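/- Suppose g : ℝ → ℝ is C³ near t₁, g(t₁) = M > 0, g'(t₁) = 0, g''(t₁) < 0. For ε ∈ (0,1) define h_ε(t) = 1/(1 − (1−ε) g(t)/M). Then as ε → 0, the integral of h_ε over the interval [t₁ − ε^{1/4}, t₁ + ε^{1/4}] satisfies ∫ h_ε dt = (π/√ε)·(1/√(−g''(t₁)/(2M))) + O(ε^{−1/4}). -/

import Mathlib

open Real MeasureTheory intervalIntegral

/-!
With `a = -g''(t₁) / (2M)`, Taylor's theorem gives `g / M = 1 - a (t - t₁)² + O(|t - t₁|³)`, so the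
denominator `1 - (1 - ε) g / M` equals `ε + a (t - t₁)² + O(|t - t₁|³ + ε (t - t₁)²)`, and both it and
the Lorentzian model `ε + a (t - t₁)²` are at least `ε + q` with `q = a (t - t₁)² / 4`. As
`(ε + q)⁴ ≥ ε q³`, the two reciprocals differ by `O(ε^{-1/2})` pointwise, hence by `O(ε^{-1/4})` on
the interval of length `2 ε^{1/4}`. The model integrates to `2 arctan (√a ε^{1/4} / √ε) / √(ε a)`,
which falls short of `π / √(ε a)` by at most `2 / (a ε^{1/4})` since `π / 2 - arctan x ≤ 1 / x`.
-/

open Asymptotics Filter Set Topology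

theorem isBigO_sub_pow_succ_of_hasDerivAt {E : Type*} [NormedAddCommGroup E] [NormedSpace ℝ E]
    {f f' : ℝ → E} {x₀ : ℝ} {n : ℕ} (hf : ∀ᶠ x in 𝓝 x₀, HasDerivAt f (f' x) x)
    (hf' : f' =O[𝓝 x₀] fun x => (x - x₀) ^ n) :
    (fun x => f x - f x₀) =O[𝓝 x₀] fun x => (x - x₀) ^ (n + 1) := by
  obtain ⟨c, hc0, hc⟩ := hf'.exists_pos
  obtain ⟨r, hr, hball⟩ := Metric.eventually_nhds_iff_ball.1 (hf.and hc.bound)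
  refine IsBigO.of_bound c (Metric.eventually_nhds_iff_ball.2 ⟨r, hr, fun x hx => ?_⟩)
  have hsub : Metric.closedBall x₀ |x - x₀| ⊆ Metric.ball x₀ r :=
    Metric.closedBall_subset_ball (by rwa [← Real.dist_eq])
  have hbound : ∀ y ∈ Metric.closedBall x₀ |x - x₀|, ‖f' y‖ ≤ c * |x - x₀| ^ n := by
    intro y hy
    calc ‖f' y‖ ≤ c * ‖(y - x₀) ^ n‖ := (hball y (hsub hy)).2
      _ ≤ c * |x - x₀| ^ n := by
        rw [norm_pow, Real.norm_eq_abs, ← Real.dist_eq]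
        gcongr
        exact hy
  calc ‖f x - f x₀‖ ≤ c * |x - x₀| ^ n * ‖x - x₀‖ :=
        (convex_closedBall x₀ |x - x₀|).norm_image_sub_le_of_norm_hasDerivWithin_le
          (fun y hy => (hball y (hsub hy)).1.hasDerivWithinAt) hbound
          (Metric.mem_closedBall_self (abs_nonneg _)) (by simp [Real.dist_eq])
    _ = c * ‖(x - x₀) ^ (n + 1)‖ := by rw [norm_pow, Real.norm_eq_abs, pow_succ]; ring

theorem ContDiffAt.isBigO_sub_quadratic_taylor {g : ℝ → ℝ} {x₀ : ℝ} (hg : ContDiffAt ℝ 3 g x₀) :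
    (fun x => g x - (g x₀ + deriv g x₀ * (x - x₀) + deriv (deriv g) x₀ / 2 * (x - x₀) ^ 2))
      =O[𝓝 x₀] fun x => (x - x₀) ^ 3 := by
  have hg' : ContDiffAt ℝ 2 (deriv g) x₀ := hg.derivWithin (by norm_num)
  have hd1 : ∀ᶠ x in 𝓝 x₀, HasDerivAt g (deriv g x) x :=
    (hg.eventually (by simp)).mono fun x hx => (hx.differentiableAt (by simp)).hasDerivAt
  have hd2 : ∀ᶠ x in 𝓝 x₀, HasDerivAt (deriv g) (deriv (deriv g) x) x :=
    (hg'.eventually (by simp)).mono fun x hx => (hx.differentiableAt (by simp)).hasDerivAt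
  have hd3 : (fun x => deriv (deriv g) x - deriv (deriv g) x₀) =O[𝓝 x₀]
      fun x => (x - x₀) ^ 1 := by
    simpa using ((hg'.derivWithin (m := 1) (by norm_num)).differentiableAt (by simp)).isBigO_sub
  have hlin (c x : ℝ) : HasDerivAt (fun x => c * (x - x₀)) c x := by
    simpa using ((hasDerivAt_id x).sub_const x₀).const_mul c
  have hquad (c x : ℝ) : HasDerivAt (fun x => c / 2 * (x - x₀) ^ 2) (c * (x - x₀)) x := by
    refine ((((hasDerivAt_id x).sub_const x₀).fun_pow 2).const_mul (c / 2)).congr_deriv ?_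
    simp only [id, Nat.cast_ofNat]
    ring
  have h2 := isBigO_sub_pow_succ_of_hasDerivAt
    (f := fun x => deriv g x - deriv (deriv g) x₀ * (x - x₀))
    (hd2.mono fun x hx => hx.sub (hlin _ x)) hd3
  have h3 := isBigO_sub_pow_succ_of_hasDerivAt
    (f := fun x => g x - deriv g x₀ * (x - x₀) - deriv (deriv g) x₀ / 2 * (x - x₀) ^ 2)
    (hd1.mono fun x hx => ((hx.sub (hlin _ x)).sub (hquad _ x)).congr_deriv (by ring)) h2
  refine h3.congr_left fun x => ?_
  simp only [sub_self]
  ring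

theorem Real.pi_div_two_sub_arctan_le_inv {x : ℝ} (hx : 0 < x) : π / 2 - arctan x ≤ x⁻¹ := by
  rw [← arctan_inv_of_pos hx]
  calc arctan x⁻¹ ≤ tan (arctan x⁻¹) :=
        le_tan (arctan_nonneg.2 (inv_nonneg.2 hx.le)) (arctan_lt_pi_div_two _)
    _ = x⁻¹ := tan_arctan _

theorem integral_one_div_add_mul_sq {p b : ℝ} (hp : 0 < p) (hb : 0 < b) (x₀ L : ℝ) :
    ∫ t in x₀ - L..x₀ + L, 1 / (p + b * (t - x₀) ^ 2) =
      2 * arctan (√b * L / √p) / (√p * √b) := by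
  have hsp : 0 < √p := sqrt_pos.2 hp
  have hsb : 0 < √b := sqrt_pos.2 hb
  have hF (t : ℝ) : HasDerivAt (fun t => arctan (√b * (t - x₀) / √p) / (√p * √b))
      (1 / (p + b * (t - x₀) ^ 2)) t := by
    have hlin : HasDerivAt (fun t => √b * (t - x₀) / √p) (√b / √p) t := by
      simpa using (((hasDerivAt_id t).sub_const x₀).const_mul √b).div_const √p
    refine ((hlin.arctan).div_const _).congr_deriv ?_
    field_simp
    rw [sq_sqrt hp.le, sq_sqrt hb.le]
    ring
  have hcont : Continuous fun t => 1 / (p + b * (t - x₀) ^ 2) :=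
    continuous_const.div (by fun_prop) fun t => by positivity
  rw [integral_eq_sub_of_hasDerivAt (fun t _ => hF t) (hcont.intervalIntegrable _ _)]
  simp only [add_sub_cancel_left, sub_sub_cancel_left, mul_neg, neg_div, arctan_neg]
  ring

theorem abs_integral_one_div_add_mul_sq_sub_le {p b L : ℝ} (hp : 0 < p) (hb : 0 < b)
    (hL : 0 < L) (x₀ : ℝ) :
    |(∫ t in x₀ - L..x₀ + L, 1 / (p + b * (t - x₀) ^ 2)) - π / (√p * √b)| ≤ 2 / (b * L) := by
  have hsp : 0 < √p := sqrt_pos.2 hp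
  have hsb : 0 < √b := sqrt_pos.2 hb
  set x := √b * L / √p with hx_def
  have hx : 0 < x := by positivity
  rw [integral_one_div_add_mul_sq hp hb, abs_sub_comm,
    show π / (√p * √b) - 2 * arctan x / (√p * √b) = 2 * (π / 2 - arctan x) / (√p * √b) by ring,
    abs_of_nonneg (div_nonneg (mul_nonneg zero_le_two (sub_nonneg.2 (arctan_lt_pi_div_two x).le))
      (by positivity))]
  calc 2 * (π / 2 - arctan x) / (√p * √b) ≤ 2 * x⁻¹ / (√p * √b) := by
        gcongr
        exact pi_div_two_sub_arctan_le_inv hx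
    _ = 2 / (b * L) := by
      rw [hx_def]
      field_simp
      rw [sq_sqrt hb.le]

theorem mul_pow_three_le_sq_add_sq_sq {u v : ℝ} (hu : 0 ≤ u) (hv : 0 ≤ v) :
    u * v ^ 3 ≤ (u ^ 2 + v ^ 2) ^ 2 := by
  rcases le_total u v with h | h
  · nlinarith [mul_le_mul_of_nonneg_right h (pow_nonneg hv 3), pow_nonneg hu 4,
      mul_nonneg (sq_nonneg u) (sq_nonneg v)]
  · nlinarith [mul_le_mul_of_nonneg_left (pow_le_pow_left₀ hv h 3) hu, pow_nonneg hv 4,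
      mul_nonneg (sq_nonneg u) (sq_nonneg v)]

theorem abs_one_div_sub_one_div_le {m x y : ℝ} (hm : 0 < m) (hx : m ≤ x) (hy : m ≤ y) :
    |1 / x - 1 / y| ≤ |x - y| / m ^ 2 := by
  have hx0 : 0 < x := hm.trans_le hx
  have hy0 : 0 < y := hm.trans_le hy
  rw [div_sub_div _ _ hx0.ne' hy0.ne', one_mul, mul_one, abs_div, abs_sub_comm,
    abs_of_pos (mul_pos hx0 hy0)]
  gcongr
  nlinarith

section QuadraticMinimum

variable {a K ε s y : ℝ}

theorem add_mul_sq_div_four_le_one_sub_mul (ha : 0 ≤ a) (hε : ε ≤ 1 / 2)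
    (hKs : K * |s| ≤ a / 2) (hy : |y - (1 - a * s ^ 2)| ≤ K * |s| ^ 3) :
    ε + a * s ^ 2 / 4 ≤ 1 - (1 - ε) * y := by
  have hcube : K * |s| ^ 3 ≤ a / 2 * s ^ 2 := by
    rw [pow_succ', ← mul_assoc, sq_abs]
    exact mul_le_mul_of_nonneg_right hKs (sq_nonneg s)
  have hy' : a / 2 * s ^ 2 ≤ 1 - y := by linarith [(abs_le.1 hy).2]
  nlinarith [mul_nonneg ha (sq_nonneg s)]

theorem abs_one_div_one_sub_mul_sub_one_div_le {L : ℝ} (ha : 0 < a) (hK : 0 ≤ K) (hL : 0 < L)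
    (hεL : L ^ 4 = ε) (hε : ε ≤ 1 / 2) (hKs : K * |s| ≤ a / 2)
    (hy : |y - (1 - a * s ^ 2)| ≤ K * |s| ^ 3) :
    |1 / (1 - (1 - ε) * y) - 1 / (ε + a * s ^ 2)| ≤ (8 * K / (a * √a) + 1) / L ^ 2 := by
  set m := ε + a * s ^ 2 / 4 with hm_def
  have hε0 : 0 < ε := hεL ▸ by positivity
  have hm : 0 < m := by positivity
  have hsa : 0 < √a := sqrt_pos.2 ha
  have hdiff : |(1 - (1 - ε) * y) - (ε + a * s ^ 2)| ≤ K * |s| ^ 3 + ε * (a * s ^ 2) := by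
    have hsplit : (1 - (1 - ε) * y) - (ε + a * s ^ 2)
        = -((1 - ε) * (y - (1 - a * s ^ 2))) - ε * (a * s ^ 2) := by ring
    rw [hsplit]
    refine (abs_sub _ _).trans (add_le_add ?_ ?_)
    · rw [abs_neg, abs_mul, abs_of_nonneg (by linarith : (0 : ℝ) ≤ 1 - ε)]
      nlinarith [abs_nonneg (y - (1 - a * s ^ 2))]
    · rw [abs_of_nonneg (by positivity)]
  -- `m` is `u ^ 2 + v ^ 2` with `u = L ^ 2`, `v = √a |s| / 2`
  have hcubic : K * |s| ^ 3 * L ^ 2 ≤ 8 * K / (a * √a) * m ^ 2 := by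
    have key := mul_pow_three_le_sq_add_sq_sq (sq_nonneg L) (by positivity : 0 ≤ √a * |s| / 2)
    have hv : (√a * |s| / 2) ^ 2 = a * s ^ 2 / 4 := by
      rw [div_pow, mul_pow, sq_sqrt ha.le, sq_abs]; ring
    rw [← pow_mul, hεL, hv, ← hm_def] at key
    rw [div_mul_eq_mul_div, le_div_iff₀ (by positivity)]
    have hcube : (√a * |s| / 2) ^ 3 = a * √a * |s| ^ 3 / 8 := by
      rw [div_pow, mul_pow, pow_succ √a 2, sq_sqrt ha.le]; ring
    rw [hcube] at key
    nlinarith [mul_le_mul_of_nonneg_left key hK]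
  have hquad : ε * (a * s ^ 2) * L ^ 2 ≤ m ^ 2 := by
    have hL2 : L ^ 2 ≤ 1 := by nlinarith [sq_nonneg (L ^ 2)]
    nlinarith [sq_nonneg (ε - a * s ^ 2 / 4), mul_nonneg hε0.le (mul_nonneg ha.le (sq_nonneg s))]
  calc |1 / (1 - (1 - ε) * y) - 1 / (ε + a * s ^ 2)|
      ≤ |(1 - (1 - ε) * y) - (ε + a * s ^ 2)| / m ^ 2 :=
        abs_one_div_sub_one_div_le hm (add_mul_sq_div_four_le_one_sub_mul ha.le hε hKs hy)
          (by nlinarith [sq_nonneg s])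
    _ ≤ (K * |s| ^ 3 + ε * (a * s ^ 2)) / m ^ 2 := by gcongr
    _ ≤ (8 * K / (a * √a) + 1) / L ^ 2 := by
      rw [div_le_div_iff₀ (by positivity) (by positivity)]
      nlinarith

end QuadraticMinimum

section Laplace

variable {ψ : ℝ → ℝ} {x₀ a : ℝ}

theorem abs_integral_one_div_one_sub_mul_sub_le {K ε L : ℝ} (ha : 0 < a) (hK : 0 ≤ K)
    (hL : 0 < L) (hεL : L ^ 4 = ε) (hε : ε ≤ 1 / 2) (hKL : K * L ≤ a / 2)
    (hψc : ContinuousOn ψ (Icc (x₀ - L) (x₀ + L)))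
    (hψ : ∀ t ∈ Icc (x₀ - L) (x₀ + L), |ψ t - (1 - a * (t - x₀) ^ 2)| ≤ K * |t - x₀| ^ 3) :
    |(∫ t in x₀ - L..x₀ + L, 1 / (1 - (1 - ε) * ψ t)) - π / (√ε * √a)| ≤
      2 * (8 * K / (a * √a) + 1 + 1 / a) / L := by
  have hε0 : 0 < ε := hεL ▸ by positivity
  have hle : x₀ - L ≤ x₀ + L := by linarith
  have hKs : ∀ t ∈ Icc (x₀ - L) (x₀ + L), K * |t - x₀| ≤ a / 2 := fun t ht =>
    (mul_le_mul_of_nonneg_left (abs_sub_le_iff.2 ⟨by linarith [ht.2], by linarith [ht.1]⟩) hK).trans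
      hKL
  have hpos : ∀ t ∈ Icc (x₀ - L) (x₀ + L), 0 < 1 - (1 - ε) * ψ t := fun t ht =>
    (by positivity : 0 < ε + a * (t - x₀) ^ 2 / 4).trans_le
      (add_mul_sq_div_four_le_one_sub_mul ha.le hε (hKs t ht) (hψ t ht))
  have hint : IntervalIntegrable (fun t => 1 / (1 - (1 - ε) * ψ t)) volume (x₀ - L) (x₀ + L) := by
    refine ContinuousOn.intervalIntegrable ?_
    rw [uIcc_of_le hle]
    exact continuousOn_const.div (continuousOn_const.sub (continuousOn_const.mul hψc))
      fun t ht => (hpos t ht).ne'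
  have hint₀ : IntervalIntegrable (fun t => 1 / (ε + a * (t - x₀) ^ 2)) volume
      (x₀ - L) (x₀ + L) :=
    (continuous_const.div (by fun_prop) fun t => by positivity).intervalIntegrable _ _
  have hcompare : |(∫ t in x₀ - L..x₀ + L, 1 / (1 - (1 - ε) * ψ t)) -
      ∫ t in x₀ - L..x₀ + L, 1 / (ε + a * (t - x₀) ^ 2)| ≤
        (8 * K / (a * √a) + 1) / L ^ 2 * |x₀ + L - (x₀ - L)| := by
    rw [← integral_sub hint hint₀, ← Real.norm_eq_abs (∫ _ in _.._, _)]
    refine intervalIntegral.norm_integral_le_of_norm_le_const fun t ht => ?_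
    rw [uIoc_of_le hle] at ht
    exact abs_one_div_one_sub_mul_sub_one_div_le ha hK hL hεL hε (hKs t (Ioc_subset_Icc_self ht))
      (hψ t (Ioc_subset_Icc_self ht))
  have hmodel := abs_integral_one_div_add_mul_sq_sub_le hε0 ha hL x₀
  calc _ ≤ _ := abs_sub_le _ (∫ t in x₀ - L..x₀ + L, 1 / (ε + a * (t - x₀) ^ 2)) _
    _ ≤ (8 * K / (a * √a) + 1) / L ^ 2 * |x₀ + L - (x₀ - L)| + 2 / (a * L) :=
      add_le_add hcompare hmodel
    _ = 2 * (8 * K / (a * √a) + 1 + 1 / a) / L := by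
      rw [show x₀ + L - (x₀ - L) = 2 * L by ring, abs_of_pos (by positivity)]
      field_simp

theorem laplace_type_asymptotic_of_isBigO (ha : 0 < a) (hψc : ∀ᶠ t in 𝓝 x₀, ContinuousAt ψ t)
    (hψ : (fun t => ψ t - (1 - a * (t - x₀) ^ 2)) =O[𝓝 x₀] fun t => (t - x₀) ^ 3) :
    ∃ C > 0, ∃ ε₀ > 0, ∀ ε ∈ Ioo (0 : ℝ) ε₀,
      |(∫ t in (x₀ - ε ^ ((1 : ℝ) / 4))..(x₀ + ε ^ ((1 : ℝ) / 4)), 1 / (1 - (1 - ε) * ψ t)) -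
        (π / √ε) * (1 / √a)| ≤ C * ε ^ (-(1 : ℝ) / 4) := by
  obtain ⟨K, hK, hKψ⟩ := hψ.exists_pos
  obtain ⟨δ, hδ, hball⟩ := Metric.eventually_nhds_iff_ball.1 (hψc.and hKψ.bound)
  set ρ := min (δ / 2) (a / (2 * K))
  have hρ : 0 < ρ := by positivity
  refine ⟨2 * (8 * K / (a * √a) + 1 + 1 / a), by positivity, min (ρ ^ 4) (1 / 2), by positivity,
    fun ε ⟨hε, hερ⟩ => ?_⟩
  set L := ε ^ ((1 : ℝ) / 4) with hL_def
  have hL : 0 < L := rpow_pos_of_pos hε _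
  have hεL : L ^ 4 = ε := by
    rw [hL_def, ← rpow_natCast, ← rpow_mul hε.le]
    norm_num
  have hLρ : L < ρ :=
    (pow_lt_pow_iff_left₀ hL.le hρ.le (by norm_num)).1 (hεL ▸ hερ.trans_le (min_le_left _ _))
  have hKL : K * L ≤ a / 2 := by
    have := mul_le_mul_of_nonneg_left (hLρ.le.trans (min_le_right _ _)) hK.le
    rwa [mul_div_assoc', mul_comm 2 K, ← div_div, mul_div_cancel_left₀ _ hK.ne'] at this
  have hsub : Icc (x₀ - L) (x₀ + L) ⊆ Metric.ball x₀ δ := fun t ht => by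
    rw [Metric.mem_ball, Real.dist_eq, abs_sub_lt_iff]
    constructor <;> linarith [ht.1, ht.2, hLρ.trans_le (min_le_left _ _)]
  rw [show ε ^ (-(1 : ℝ) / 4) = L⁻¹ by rw [neg_div, rpow_neg hε.le], div_mul_div_comm, mul_one,
    ← div_eq_mul_inv]
  refine abs_integral_one_div_one_sub_mul_sub_le ha hK.le hL hεL
    (by linarith [hερ.trans_le (min_le_right _ _)]) hKL
    (fun t ht => (hball t (hsub ht)).1.continuousWithinAt) fun t ht => ?_
  simpa only [norm_pow, Real.norm_eq_abs] using (hball t (hsub ht)).2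

end Laplace

theorem laplace_type_asymptotic (g : ℝ → ℝ) (t₁ M : ℝ)
    (hg : ContDiffAt ℝ 3 g t₁) (hM : g t₁ = M) (hMpos : 0 < M)
    (h1 : deriv g t₁ = 0) (h2 : deriv (deriv g) t₁ < 0) :
    ∃ C > 0, ∃ ε₀ > 0, ∀ ε ∈ Set.Ioo (0 : ℝ) ε₀,
      |(∫ t in (t₁ - ε ^ ((1 : ℝ) / 4))..(t₁ + ε ^ ((1 : ℝ) / 4)),
          1 / (1 - (1 - ε) * g t / M)) -
        (π / Real.sqrt ε) * (1 / Real.sqrt (-(deriv (deriv g) t₁) / (2 * M)))| ≤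
      C * ε ^ (-(1 : ℝ) / 4) := by
  have ha : 0 < -deriv (deriv g) t₁ / (2 * M) := div_pos (neg_pos.2 h2) (by positivity)
  have hψc : ∀ᶠ t in 𝓝 t₁, ContinuousAt (fun t => g t / M) t :=
    (hg.eventually (by simp)).mono fun t ht => ht.continuousAt.div_const M
  have hψ : (fun t => g t / M - (1 - -deriv (deriv g) t₁ / (2 * M) * (t - t₁) ^ 2))
      =O[𝓝 t₁] fun t => (t - t₁) ^ 3 := by
    refine (hg.isBigO_sub_quadratic_taylor.const_mul_left M⁻¹).congr_left fun t => ?_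
    rw [hM, h1]
    field_simp
    ring
  simpa only [mul_div_assoc] using laplace_type_asymptotic_of_isBigO ha hψc hψ
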